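/- Let B ∈ SL(N,ℤ) with no eigenvalue of modulus 1. Then the set of solutions x ∈ ℝ^N of x = (I - Bⁿ)⁻¹ b, ranging over b ∈ ℤ^N and n ∈ ℤ \ {0}, is dense in ℝ^N. -/

import Mathlib

/-!
Every point `v / q` of `(1/q)ℤ^N` is a fixed point. Since `det B = 1`, `B` is invertible modulo `q`,
so `Bᵐ ≡ 1 (mod q)` for some `m > 0`; then `(1 - Bᵐ) v = q c` with `c ∈ ℤ^N`, i.e.
`v / q = (1 - Bᵐ)⁻¹ c`. Here `1 - Bᵐ` is invertible because `1` is not an eigenvalue of `Bᵐ`: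
the eigenvalues of `Bᵐ` are the `m`-th powers of those of `B`, none of modulus `1`.
Finally, the points of `(1/q)ℤ^N` for all `q` are dense.
-/

open Matrix

/-- Integer power of a matrix, using the nonsingular inverse for negative exponents. -/
noncomputable def mzpow {N : ℕ} (A : Matrix (Fin N) (Fin N) ℝ) : ℤ → Matrix (Fin N) (Fin N) ℝ
  | (Int.ofNat n) => A ^ n
  | (Int.negSucc n) => A⁻¹ ^ (n + 1)

theorem isUnit_one_sub_pow_of_norm_ne_one {𝕜 A : Type*} [NormedField 𝕜] [IsAlgClosed 𝕜] [Ring A]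
    [Algebra 𝕜 A] {a : A} (ha : ∀ μ ∈ spectrum 𝕜 a, ‖μ‖ ≠ 1) {m : ℕ} (hm : 0 < m) :
    IsUnit (1 - a ^ m) := by
  by_contra h
  have h1 : (1 : 𝕜) ∈ spectrum 𝕜 (a ^ m) := by rwa [spectrum.mem_iff, map_one]
  rw [spectrum.map_pow_of_pos a hm] at h1
  obtain ⟨μ, hμ, hμm : μ ^ m = 1⟩ := h1
  have : ‖μ‖ ^ m = 1 := by rw [← norm_pow, hμm, norm_one]
  exact ha μ hμ ((pow_eq_one_iff_of_nonneg (norm_nonneg μ) hm.ne').1 this)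

theorem dense_of_forall_inv_smul_intCast_mem {ι : Type*} [Fintype ι] {S : Set (ι → ℝ)}
    (hS : ∀ (q : ℕ) (v : ι → ℤ), 0 < q → (q : ℝ)⁻¹ • (fun i => (v i : ℝ)) ∈ S) : Dense S := by
  rw [Metric.dense_iff]
  intro x r hr
  obtain ⟨q, hq⟩ := exists_nat_gt r⁻¹
  have hq0 : (0 : ℝ) < q := (inv_pos.2 hr).trans hq
  refine ⟨_, ?_, hS q (fun i => ⌊q * x i⌋) (by exact_mod_cast hq0)⟩
  rw [Metric.mem_ball, dist_pi_lt_iff hr]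
  intro i
  have hfract : (q : ℝ)⁻¹ * ⌊q * x i⌋ - x i = -(q : ℝ)⁻¹ * Int.fract (q * x i) := by
    rw [Int.fract]; field_simp; ring
  calc dist ((q : ℝ)⁻¹ * ⌊q * x i⌋) (x i) = (q : ℝ)⁻¹ * Int.fract (q * x i) := by
        rw [Real.dist_eq, hfract, abs_mul, abs_neg, abs_of_pos (inv_pos.2 hq0),
          abs_of_nonneg (Int.fract_nonneg _)]
    _ < (q : ℝ)⁻¹ * 1 := by gcongr; exact Int.fract_lt_one _
    _ < r := by rw [mul_one]; exact inv_lt_of_inv_lt₀ hr hq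

namespace Matrix

theorem dvd_mulVec_of_map_zmod_eq_zero {m n : Type*} [Fintype n] {q : ℕ} {A : Matrix m n ℤ}
    (hA : A.map (Int.cast : ℤ → ZMod q) = 0) (v : n → ℤ) (i : m) : (q : ℤ) ∣ (A *ᵥ v) i := by
  rw [← ZMod.intCast_zmod_eq_zero_iff_dvd, ← eq_intCast (Int.castRingHom _), RingHom.map_mulVec]
  simp [hA]

variable {n : Type*} [Fintype n] [DecidableEq n]

theorem map_intCast_one_sub_pow (R : Type*) [Ring R] (B : Matrix n n ℤ) (m : ℕ) :
    (1 - B ^ m).map (Int.cast : ℤ → R) = 1 - B.map Int.cast ^ m := by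
  rw [Matrix.map_sub _ (fun _ _ => Int.cast_sub _ _), Matrix.map_one _ Int.cast_zero Int.cast_one]
  exact congrArg _ (Matrix.map_pow B (Int.castRingHom R) m)

theorem det_one_sub_pow_ne_zero_of_norm_ne_one (B : Matrix n n ℤ)
    (hB : ∀ μ ∈ spectrum ℂ (B.map (Int.cast : ℤ → ℂ)), ‖μ‖ ≠ 1) {m : ℕ} (hm : 0 < m) :
    (1 - B ^ m).det ≠ 0 := by
  have h := (isUnit_iff_isUnit_det _).1 (isUnit_one_sub_pow_of_norm_ne_one hB hm)
  rw [← map_intCast_one_sub_pow, ← Int.cast_det] at h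
  exact_mod_cast h.ne_zero

theorem exists_pow_map_zmod_eq_one (B : Matrix n n ℤ) (hB : IsUnit B.det) (q : ℕ) [NeZero q] :
    ∃ m, 0 < m ∧ B.map (Int.cast : ℤ → ZMod q) ^ m = 1 := by
  obtain ⟨u, hu⟩ : IsUnit (B.map (Int.cast : ℤ → ZMod q)) := by
    rw [isUnit_iff_isUnit_det, ← Int.cast_det]
    exact hB.map (Int.castRingHom _)
  refine ⟨orderOf u, orderOf_pos u, ?_⟩
  rw [← hu, ← Units.val_pow_eq_pow_val, pow_orderOf_eq_one, Units.val_one]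

theorem exists_inv_smul_eq_inv_one_sub_pow_mulVec (B : Matrix n n ℤ) (hB : IsUnit B.det)
    (hsub : ∀ m, 0 < m → (1 - B ^ m).det ≠ 0) (q : ℕ) [NeZero q] (v : n → ℤ) :
    ∃ (c : n → ℤ) (m : ℕ), 0 < m ∧ (q : ℝ)⁻¹ • (fun i => (v i : ℝ)) =
      (1 - B.map (Int.cast : ℤ → ℝ) ^ m)⁻¹ *ᵥ (fun i => (c i : ℝ)) := by
  obtain ⟨m, hm, hBm⟩ := exists_pow_map_zmod_eq_one B hB q
  have hdvd : ∀ i, (q : ℤ) ∣ ((1 - B ^ m) *ᵥ v) i := by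
    refine dvd_mulVec_of_map_zmod_eq_zero ?_ v
    rw [map_intCast_one_sub_pow, hBm, sub_self]
  choose c hc using hdvd
  refine ⟨c, m, hm, ?_⟩
  have hdet : IsUnit (1 - B.map (Int.cast : ℤ → ℝ) ^ m).det := by
    rw [← map_intCast_one_sub_pow, ← Int.cast_det, isUnit_iff_ne_zero]
    exact_mod_cast hsub m hm
  have hM : (1 - B.map (Int.cast : ℤ → ℝ) ^ m) *ᵥ ((q : ℝ)⁻¹ • (fun i => (v i : ℝ))) =
      fun i => (c i : ℝ) := by
    ext i
    have hcast := RingHom.map_mulVec (Int.castRingHom ℝ) (1 - B ^ m) v i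
    simp only [Int.coe_castRingHom, hc i, map_intCast_one_sub_pow] at hcast
    rw [mulVec_smul, Pi.smul_apply, smul_eq_mul,
      show (fun i => (v i : ℝ)) = (fun k : ℤ => (k : ℝ)) ∘ v from rfl, ← hcast, Int.cast_mul,
      Int.cast_natCast, inv_mul_cancel_left₀ (Nat.cast_ne_zero.2 (NeZero.ne q))]
  rw [← hM, mulVec_mulVec, nonsing_inv_mul _ hdet, one_mulVec]

end Matrix

/-- Let `B ∈ SL(N,ℤ)` with no eigenvalue of modulus `1`. Then the set of solutions
`x = (I - Bⁿ)⁻¹ b`, `b ∈ ℤ^N`, `n ∈ ℤ \ {0}` (the points with nontrivial isotropy for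
the affine action of `ℤ^N ⋊_B ℤ` on `ℝ^N`), is dense in `ℝ^N`. -/
theorem fixed_points_dense {N : ℕ} (B : Matrix (Fin N) (Fin N) ℤ)
    (hdet : B.det = 1)
    (hhyp : ∀ μ ∈ spectrum ℂ (B.map (fun k => (k : ℂ))), ‖μ‖ ≠ 1) :
    Dense {z : Fin N → ℝ | ∃ (b : Fin N → ℤ) (n : ℤ), n ≠ 0 ∧
      z = ((1 - mzpow (B.map (fun k => (k : ℝ))) n)⁻¹).mulVec (fun i => (b i : ℝ))} := by
  refine dense_of_forall_inv_smul_intCast_mem fun q v hq => ?_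
  have : NeZero q := ⟨hq.ne'⟩
  obtain ⟨c, m, hm, hv⟩ := B.exists_inv_smul_eq_inv_one_sub_pow_mulVec (hdet ▸ isUnit_one)
    (fun _ => B.det_one_sub_pow_ne_zero_of_norm_ne_one hhyp) q v
  exact ⟨c, m, by omega, hv⟩
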